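/- Identify S^1 with the unit circle in ℂ, and let A = S^1 × [0,1] be the annulus. Define the Dehn twist τ : A → A by τ(z,t) = (exp(2πit)·z, t); τ is a homeomorphism of A fixing the boundary S^1 × {0,1} pointwise. Then the quotient topological space of A × [0,1] by the equivalence relation generated by ((z,a),t) ~ ((z,a),t') for all z ∈ S^1, a ∈ {0,1}, t,t' ∈ [0,1], and ((z,s),1) ~ (τ(z,s),0) for all (z,s) ∈ A, is homeomorphic to the unit sphere S^3 in EuclideanSpace ℝ (Fin 4). -/

import Mathlib

/-!
Write `𝐞 x = exp (2πix)`. The map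
`((z, s), t) ↦ (√s · 𝐞(t(s - 1)) · z, √(1 - s) · 𝐞(ts) · z)`
sends the mapping torus of the annulus into the unit sphere of `ℂ²`. The phase of `w₁ / w₂`
is `𝐞(-t)`, so the pages are the level sets of `arg (w₁ w̄₂)` and the binding is the Hopf
link `w₁ w₂ = 0`; on it one of the coordinates vanishes and the other is `z`, independent
of `t`. Since `𝐞(s - 1) = 𝐞(s)`, the page `t = 1` is glued to the page `t = 0` exactly by
the Dehn twist. Thus the map identifies precisely the points related by the open book
relation and hits every point of `S³` (write both coordinates in polar form), and a continuous
bijection from a compact space onto a Hausdorff one is a homeomorphism.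
-/

open Metric unitInterval

noncomputable section

/-- The unit sphere of dimension `m` in `EuclideanSpace ℝ (Fin (m+1))`. -/
def Sph (m : ℕ) : Set (EuclideanSpace ℝ (Fin (m + 1))) := Metric.sphere 0 1

/-- The Dehn twist along the core circle of the annulus `S¹ × [0,1]`
(with `S¹` the unit circle in `ℂ`): `τ(z,t) = (exp(2πit)·z, t)`. -/
noncomputable def dehnTwist (p : Circle × I) : Circle × I :=
  (Circle.exp (2 * Real.pi * (p.2 : ℝ)) * p.1, p.2)

/-- The relation generating the open book quotient on the annulus page with monodromy
the Dehn twist: `((z,a),t) ~ ((z,a),t')` for `a ∈ {0,1}`, and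
`((z,s),1) ~ (τ(z,s),0)`. -/
def hopfObRel (p q : (Circle × I) × I) : Prop :=
  (p.1 = q.1 ∧ (p.1.2 = 0 ∨ p.1.2 = 1)) ∨
  (p.2 = 1 ∧ q.2 = 0 ∧ q.1 = dehnTwist p.1)

open Real FourierTransform

def Quot.homeomorphOfCompactT2 {X Y : Type*} [TopologicalSpace X] [CompactSpace X]
    [TopologicalSpace Y] [T2Space Y] {r : X → X → Prop} {f : X → Y} (hf : Continuous f)
    (hsurj : Function.Surjective f) (hsound : ∀ p q, r p q → f p = f q)
    (hexact : ∀ p q, f p = f q → Relation.EqvGen r p q) : Quot r ≃ₜ Y :=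
  let g : Quot r → Y := Quot.lift f hsound
  have hg : Function.Bijective g := by
    refine ⟨fun a b => ?_, fun y => ?_⟩
    · induction a using Quot.ind with | _ p =>
      induction b using Quot.ind with | _ q =>
      exact fun h => Quot.eqvGen_sound (hexact p q h)
    · obtain ⟨p, rfl⟩ := hsurj y
      exact ⟨Quot.mk r p, rfl⟩
  Continuous.homeoOfEquivCompactToT2 (f := Equiv.ofBijective g hg) (continuous_quot_lift _ hf)

theorem Real.fourierChar_eq_fourierChar_iff {a b : ℝ} :
    𝐞 a = 𝐞 b ↔ ∃ n : ℤ, a = b + n := by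
  simp only [fourierChar_apply', Circle.exp_eq_exp]
  refine exists_congr fun n => ?_
  rw [show 2 * π * b + n * (2 * π) = 2 * π * (b + n) by ring]
  exact mul_right_inj' two_pi_pos.ne'

theorem Real.exists_fourierChar_eq (u : Circle) : ∃ t : I, 𝐞 t = u := by
  obtain ⟨x, rfl⟩ := Circle.exp_surjective u
  set y := x / (2 * π)
  have hy : 𝐞 y = Circle.exp x := by
    rw [fourierChar_apply', mul_div_cancel₀ _ two_pi_pos.ne']
  refine ⟨⟨Int.fract y, fract_mem y⟩, ?_⟩
  rw [← hy, fourierChar_eq_fourierChar_iff]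
  exact ⟨-⌊y⌋, by simp only [← Int.self_sub_floor]; push_cast; ring⟩

theorem unitInterval.eq_or_of_fourierChar_eq {t t' : I} (h : 𝐞 t = 𝐞 t') :
    t = t' ∨ (t = 1 ∧ t' = 0) ∨ (t = 0 ∧ t' = 1) := by
  obtain ⟨n, hn⟩ := fourierChar_eq_fourierChar_iff.1 h
  have hn₁ : n ≤ 1 := by exact_mod_cast (show (n : ℝ) ≤ 1 by linarith [t.2.2, t'.2.1])
  have hn₂ : -1 ≤ n := by exact_mod_cast (show (-1 : ℝ) ≤ n by linarith [t.2.1, t'.2.2])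
  interval_cases n
  all_goals push_cast at hn
  · exact .inr (.inr ⟨Set.Icc.coe_eq_zero.1 (by linarith [t.2.1, t'.2.2]),
      Set.Icc.coe_eq_one.1 (by linarith [t.2.1, t'.2.2])⟩)
  · exact .inl (Subtype.ext (by simpa using hn))
  · exact .inr (.inl ⟨Set.Icc.coe_eq_one.1 (by linarith [t.2.2, t'.2.1]),
      Set.Icc.coe_eq_zero.1 (by linarith [t.2.2, t'.2.1])⟩)

theorem Complex.exists_circle_eq_norm_mul (w : ℂ) : ∃ u : Circle, w = ‖w‖ * u :=
  ⟨Circle.exp w.arg, by rw [Circle.coe_exp, Complex.norm_mul_exp_arg_mul_I]⟩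

def complexPairToEuclidean (w : ℂ × ℂ) : EuclideanSpace ℝ (Fin 4) :=
  !₂[w.1.re, w.1.im, w.2.re, w.2.im]

theorem continuous_complexPairToEuclidean : Continuous complexPairToEuclidean := by
  unfold complexPairToEuclidean
  fun_prop

theorem complexPairToEuclidean_injective : Function.Injective complexPairToEuclidean := by
  intro w w' h
  have hi (i : Fin 4) := congrArg (· i) h
  simp only [complexPairToEuclidean] at hi
  exact Prod.ext (Complex.ext (hi 0) (hi 1)) (Complex.ext (hi 2) (hi 3))

theorem complexPairToEuclidean_surjective : Function.Surjective complexPairToEuclidean := by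
  intro x
  refine ⟨(⟨x 0, x 1⟩, ⟨x 2, x 3⟩), ?_⟩
  ext i
  fin_cases i <;> rfl

theorem complexPairToEuclidean_mem_sph_iff (w : ℂ × ℂ) :
    complexPairToEuclidean w ∈ Sph 3 ↔ ‖w.1‖ ^ 2 + ‖w.2‖ ^ 2 = 1 := by
  rw [Sph, mem_sphere_zero_iff_norm, ← pow_eq_one_iff_of_nonneg (norm_nonneg _) two_ne_zero,
    EuclideanSpace.norm_sq_eq, Fin.sum_univ_four, Complex.sq_norm, Complex.sq_norm,
    Complex.normSq_apply, Complex.normSq_apply]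
  simp only [complexPairToEuclidean, Fin.isValue, Matrix.cons_val_zero, Matrix.cons_val_one,
    Matrix.cons_val, Real.norm_eq_abs, sq_abs]
  ring_nf

def hopfCoords (p : (Circle × I) × I) : ℂ × ℂ :=
  (√(p.1.2 : ℝ) * ↑(𝐞 (p.2 * (p.1.2 - 1)) * p.1.1),
    √(1 - p.1.2 : ℝ) * ↑(𝐞 (p.2 * p.1.2) * p.1.1))

theorem norm_hopfCoords_fst (p : (Circle × I) × I) :
    ‖(hopfCoords p).1‖ = √(p.1.2 : ℝ) := by
  simp [hopfCoords, Circle.norm_coe]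

theorem norm_hopfCoords_snd (p : (Circle × I) × I) :
    ‖(hopfCoords p).2‖ = √(1 - p.1.2 : ℝ) := by
  simp [hopfCoords, Circle.norm_coe]

theorem norm_hopfCoords_sq_add (p : (Circle × I) × I) :
    ‖(hopfCoords p).1‖ ^ 2 + ‖(hopfCoords p).2‖ ^ 2 = 1 := by
  rw [norm_hopfCoords_fst, norm_hopfCoords_snd, sq_sqrt p.1.2.2.1, sq_sqrt (sub_nonneg.2 p.1.2.2.2)]
  ring

theorem continuous_hopfCoords : Continuous hopfCoords := by
  unfold hopfCoords
  fun_prop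

theorem hopfCoords_eq_of_hopfObRel {p q : (Circle × I) × I} (h : hopfObRel p q) :
    hopfCoords p = hopfCoords q := by
  obtain ⟨⟨z, s⟩, t⟩ := p
  obtain ⟨⟨z', s'⟩, t'⟩ := q
  rcases h with ⟨hpq, hs⟩ | ⟨rfl, rfl, hq⟩
  · simp only [Prod.mk.injEq] at hpq hs
    obtain ⟨rfl, rfl⟩ := hpq
    rcases hs with rfl | rfl <;> simp [hopfCoords]
  · simp only [dehnTwist, ← fourierChar_apply', Prod.mk.injEq] at hq
    obtain ⟨rfl, rfl⟩ := hq
    have hperiodic (x : ℝ) : 𝐞 (x - 1) = 𝐞 x :=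
      fourierChar_eq_fourierChar_iff.2 ⟨-1, by push_cast; ring⟩
    simp only [hopfCoords, Set.Icc.coe_one, Set.Icc.coe_zero, one_mul, zero_mul,
      AddChar.map_zero_eq_one, hperiodic]

theorem Circle.eq_of_ofReal_mul_eq_ofReal_mul {r : ℝ} (hr : r ≠ 0) {a b : Circle}
    (h : (r : ℂ) * a = r * b) : a = b :=
  Circle.coe_injective (mul_left_cancel₀ (Complex.ofReal_ne_zero.2 hr) h)

theorem Real.fourierChar_eq_mul_div_mul (x s : ℝ) (z : Circle) :
    𝐞 x = 𝐞 (x * s) * z / (𝐞 (x * (s - 1)) * z) := by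
  rw [mul_div_mul_right_eq_div, ← AddChar.map_sub_eq_div]
  congr 1
  ring

theorem eqvGen_hopfObRel_of_phases_eq {z z' : Circle} {s t t' : I}
    (h₁ : 𝐞 (t * (s - 1)) * z = 𝐞 (t' * (s - 1)) * z') (h₂ : 𝐞 (t * s) * z = 𝐞 (t' * s) * z') :
    Relation.EqvGen hopfObRel ((z, s), t) ((z', s), t') := by
  have ht : 𝐞 t = 𝐞 t' := by
    rw [fourierChar_eq_mul_div_mul t s z, fourierChar_eq_mul_div_mul t' s z', h₁, h₂]
  rcases unitInterval.eq_or_of_fourierChar_eq ht with rfl | ⟨rfl, rfl⟩ | ⟨rfl, rfl⟩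
  · obtain rfl := mul_left_cancel h₂
    exact .refl _
  all_goals simp only [Set.Icc.coe_one, Set.Icc.coe_zero, one_mul, zero_mul,
    AddChar.map_zero_eq_one] at h₂
  · exact .rel _ _ (.inr ⟨rfl, rfl, by rw [← h₂]; rfl⟩)
  · exact .symm _ _ (.rel _ _ (.inr ⟨rfl, rfl, by rw [h₂]; rfl⟩))

theorem eqvGen_hopfObRel_of_hopfCoords_eq {p q : (Circle × I) × I}
    (h : hopfCoords p = hopfCoords q) : Relation.EqvGen hopfObRel p q := by
  obtain ⟨⟨z, s⟩, t⟩ := p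
  obtain ⟨⟨z', s'⟩, t'⟩ := q
  obtain rfl : s = s' := by
    have hnorm := congrArg (‖·.1‖) h
    simp only [norm_hopfCoords_fst] at hnorm
    exact Subtype.ext ((sqrt_inj s.2.1 s'.2.1).1 hnorm)
  obtain ⟨h₁, h₂⟩ := Prod.ext_iff.1 h
  simp only [hopfCoords] at h₁ h₂
  by_cases hs₀ : s = 0
  · subst hs₀
    simp only [Set.Icc.coe_zero, sub_zero, sqrt_one, Complex.ofReal_one, mul_zero,
      AddChar.map_zero_eq_one, one_mul] at h₂
    obtain rfl := Circle.coe_injective h₂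
    exact .rel _ _ (.inl ⟨rfl, .inl rfl⟩)
  by_cases hs₁ : s = 1
  · subst hs₁
    simp only [Set.Icc.coe_one, sqrt_one, Complex.ofReal_one, sub_self, mul_zero,
      AddChar.map_zero_eq_one, one_mul] at h₁
    obtain rfl := Circle.coe_injective h₁
    exact .rel _ _ (.inl ⟨rfl, .inr rfl⟩)
  have hsqrt₁ : √(s : ℝ) ≠ 0 := (sqrt_ne_zero s.2.1).2 (coe_ne_zero.2 hs₀)
  have hsqrt₂ : √(1 - s : ℝ) ≠ 0 :=
    (sqrt_ne_zero (sub_nonneg.2 s.2.2)).2 (sub_ne_zero.2 (coe_ne_one.2 hs₁).symm)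
  exact eqvGen_hopfObRel_of_phases_eq (Circle.eq_of_ofReal_mul_eq_ofReal_mul hsqrt₁ h₁)
    (Circle.eq_of_ofReal_mul_eq_ofReal_mul hsqrt₂ h₂)

theorem exists_hopfCoords_eq {w : ℂ × ℂ} (hw : ‖w.1‖ ^ 2 + ‖w.2‖ ^ 2 = 1) :
    ∃ p, hopfCoords p = w := by
  obtain ⟨u, hu⟩ := Complex.exists_circle_eq_norm_mul w.1
  obtain ⟨v, hv⟩ := Complex.exists_circle_eq_norm_mul w.2
  obtain ⟨t, ht⟩ := exists_fourierChar_eq (v / u)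
  let s : I := ⟨‖w.1‖ ^ 2, sq_nonneg _, by nlinarith [sq_nonneg ‖w.2‖]⟩
  have hs : √(s : ℝ) = ‖w.1‖ := sqrt_sq (norm_nonneg _)
  have hs' : √(1 - s : ℝ) = ‖w.2‖ := by
    rw [show (1 - s : ℝ) = ‖w.2‖ ^ 2 from (eq_sub_of_add_eq' hw).symm, sqrt_sq (norm_nonneg _)]
  refine ⟨(((𝐞 (t * s))⁻¹ * v, s), t), Prod.ext ?_ ?_⟩
  · have hu' : 𝐞 (t * (s - 1)) * ((𝐞 (t * s))⁻¹ * v) = u := by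
      rw [mul_sub, mul_one, AddChar.map_sub_eq_div, ht]
      simp [div_eq_mul_inv, mul_comm, mul_left_comm]
    rw [hu]
    simp only [hopfCoords, hs, hu']
  · rw [hv]
    simp only [hopfCoords, hs', mul_inv_cancel_left]

/-- The open book with annulus page and monodromy a single Dehn twist along the core
circle has total space `S³`. -/
theorem openBook_annulus_dehnTwist_homeomorph_S3 :
    Nonempty (Quot hopfObRel ≃ₜ ↥(Sph 3)) := by
  let f (p : (Circle × I) × I) : Sph 3 :=
    ⟨complexPairToEuclidean (hopfCoords p),
      (complexPairToEuclidean_mem_sph_iff _).2 (norm_hopfCoords_sq_add p)⟩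
  refine ⟨Quot.homeomorphOfCompactT2 (f := f) ?_ ?_ ?_ ?_⟩
  · exact (continuous_complexPairToEuclidean.comp continuous_hopfCoords).subtype_mk _
  · rintro ⟨x, hx⟩
    obtain ⟨w, rfl⟩ := complexPairToEuclidean_surjective x
    obtain ⟨p, rfl⟩ := exists_hopfCoords_eq ((complexPairToEuclidean_mem_sph_iff w).1 hx)
    exact ⟨p, rfl⟩
  · exact fun p q h =>
      Subtype.ext (congrArg complexPairToEuclidean (hopfCoords_eq_of_hopfObRel h))
  · exact fun p q h =>
      eqvGen_hopfObRel_of_hopfCoords_eq (complexPairToEuclidean_injective (congrArg Subtype.val h))
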